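/- For goods with copies and additive valuations, every EFX_WC exclusive allocation guarantees each agent at least a 4/11 fraction of her maximin share: v_i(A_i) ≥ (4/11)·MMS_i for every agent i. -/

import Mathlib

open Finset

variable {τ : Type*} [Fintype τ] [DecidableEq τ]

def IsAlloc (n : ℕ) (k : τ → ℕ) (A : Fin n → Finset τ) : Prop :=
  ∀ t, (Finset.univ.filter fun i => t ∈ A i).card = k t

def vOf (v : τ → ℝ) (S : Finset τ) : ℝ := ∑ t ∈ S, v t

def EFXwc {n : ℕ} (v : Fin n → τ → ℝ) (A : Fin n → Finset τ) : Prop :=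
  ∀ i j, ∀ g ∈ A j \ A i,
    vOf (v i) ((A j \ A i).erase g) ≤ vOf (v i) (A i \ A j)

noncomputable def MMS (n : ℕ) (k : τ → ℕ) (v : τ → ℝ) : ℝ :=
  ⨆ B : {B : Fin n → Finset τ // IsAlloc n k B}, ⨅ j, vOf v (B.1 j)

/-!
Fix agent `i`, write `x = v_i(A_i)`, and suppose some exclusive allocation `B` gives every bundle
value more than `11x/4`. Price each good outside `A_i`: a good worth more than `x` costs `x`, a
good worth `a ≤ x` costs `min (x/2) (2a/3)`. By EFX_WC, removing any good from `A_j \ A_i` leaves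
value at most `x`; hence `A_j \ A_i` is a single expensive good, or has at most two goods, or has
value at most `3x/2`, and in each case it costs at most `x`. On the other side `B_j \ A_i` is worth
more than `7x/4`, which forces it to cost at least `x`. Both allocations distribute the same
copies, so the total cost is the same and `n x ≤ (n - 1) x`, i.e. `x = 0`. Then counting goods of
positive value, at most one in each `A_j \ A_i` and at least one in each `B_j \ A_i`, gives
`n ≤ n - 1`.
-/

noncomputable def price (x a : ℝ) : ℝ := if x < a then x else min (x / 2) (2 / 3 * a)

section Price

variable {x a : ℝ}

lemma price_nonneg (hx : 0 ≤ x) (ha : 0 ≤ a) : 0 ≤ price x a := by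
  unfold price; split_ifs <;> positivity

lemma price_of_le (hax : a ≤ x) : price x a = min (x / 2) (2 / 3 * a) :=
  if_neg (not_lt.mpr hax)

lemma half_mul_ite_le_price (hx : 0 ≤ x) (ha : 0 ≤ a) :
    x / 2 * (if 3 / 4 * x < a then 1 else 0) ≤ price x a := by
  unfold price
  split_ifs <;> simp only [mul_one, mul_zero, le_min_iff] <;> (try constructor) <;> linarith

lemma two_thirds_mul_sub_le_price (hax : a ≤ x) :
    2 / 3 * a - x / 6 * (if 3 / 4 * x < a then 1 else 0) ≤ price x a := by
  rw [price_of_le hax]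
  split_ifs <;> simp only [le_min_iff] <;> constructor <;> linarith

end Price

section Valuation

variable {α : Type*} {v : α → ℝ}

lemma vOf_nonneg (hv : ∀ t, 0 ≤ v t) (S : Finset α) : 0 ≤ vOf v S :=
  sum_nonneg fun t _ => hv t

lemma vOf_mono (hv : ∀ t, 0 ≤ v t) {S T : Finset α} (h : S ⊆ T) : vOf v S ≤ vOf v T :=
  sum_le_sum_of_subset_of_nonneg h fun t _ _ => hv t

lemma le_vOf_of_mem (hv : ∀ t, 0 ≤ v t) {S : Finset α} {t : α} (ht : t ∈ S) :
    v t ≤ vOf v S :=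
  single_le_sum (fun s _ => hv s) ht

lemma vOf_le_vOf_sdiff_add [DecidableEq α] (hv : ∀ t, 0 ≤ v t) (S R : Finset α) :
    vOf v S ≤ vOf v (S \ R) + vOf v R := by
  rw [vOf, ← sum_inter_add_sum_sdiff S R, add_comm]
  exact add_le_add_right (vOf_mono hv inter_subset_right) _

end Valuation

def EFXBounded {α : Type*} [DecidableEq α] (v : α → ℝ) (x : ℝ) (S : Finset α) : Prop :=
  ∀ g ∈ S, vOf v (S.erase g) ≤ x

namespace EFXBounded

variable {α : Type*} [DecidableEq α] {v : α → ℝ} {x : ℝ} {S : Finset α}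

lemma eq_singleton (hv : ∀ t, 0 ≤ v t) (hS : EFXBounded v x S) {b : α} (hb : b ∈ S)
    (hbx : x < v b) : S = {b} := by
  refine eq_singleton_iff_unique_mem.mpr ⟨hb, fun t ht => ?_⟩
  by_contra htb
  have := le_vOf_of_mem hv (mem_erase.mpr ⟨Ne.symm htb, hb⟩)
  linarith [hS t ht]

lemma card_filter_lt_le_one (hv : ∀ t, 0 ≤ v t) (hS : EFXBounded v x S) :
    #{t ∈ S | x < v t} ≤ 1 := by
  refine card_le_one.mpr fun a ha b hb => ?_
  rw [mem_filter] at ha hb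
  have := hS.eq_singleton hv ha.1 ha.2 ▸ hb.1
  exact (mem_singleton.mp this).symm

lemma vOf_le_of_three_le_card (hv : ∀ t, 0 ≤ v t) (hS : EFXBounded v x S) (h3 : 3 ≤ #S) :
    vOf v S ≤ 3 / 2 * x := by
  obtain ⟨m, hm, hmin⟩ := S.exists_min_image v (card_pos.mp (by omega))
  have hcard : (3 : ℝ) * v m ≤ vOf v S := by
    calc (3 : ℝ) * v m ≤ #S * v m := by gcongr; exacts [hv m, by exact_mod_cast h3]
      _ ≤ vOf v S := by simpa [vOf] using card_nsmul_le_sum S v (v m) hmin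
  have hsplit : vOf v S = vOf v (S.erase m) + v m := (sum_erase_add S v hm).symm
  linarith [hS m hm]

lemma sum_price_le (hv : ∀ t, 0 ≤ v t) (hx : 0 ≤ x) (hS : EFXBounded v x S) :
    ∑ t ∈ S, price x (v t) ≤ x := by
  by_cases hbig : ∃ b ∈ S, x < v b
  · obtain ⟨b, hb, hbx⟩ := hbig
    rw [hS.eq_singleton hv hb hbx, sum_singleton, price, if_pos hbx]
  simp only [not_exists, not_and, not_lt] at hbig
  rcases le_or_gt #S 2 with hcard | hcard
  · calc ∑ t ∈ S, price x (v t) ≤ #S • (x / 2) :=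
          sum_le_card_nsmul _ _ _ fun t ht =>
            (price_of_le (hbig t ht)).trans_le (min_le_left _ _)
      _ ≤ 2 * (x / 2) := by rw [nsmul_eq_mul]; gcongr; exact_mod_cast hcard
      _ = x := by ring
  · calc ∑ t ∈ S, price x (v t) ≤ ∑ t ∈ S, 2 / 3 * v t :=
          sum_le_sum fun t ht => (price_of_le (hbig t ht)).trans_le (min_le_right _ _)
      _ = 2 / 3 * vOf v S := by rw [vOf, mul_sum]
      _ ≤ x := by linarith [hS.vOf_le_of_three_le_card hv hcard]

end EFXBounded

lemma le_sum_price {α : Type*} {v : α → ℝ} {x : ℝ} {T : Finset α} (hv : ∀ t, 0 ≤ v t)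
    (hx : 0 ≤ x) (hT : 7 / 4 * x ≤ vOf v T) :
    x ≤ ∑ t ∈ T, price x (v t) := by
  by_cases hbig : ∃ b ∈ T, x < v b
  · obtain ⟨b, hb, hbx⟩ := hbig
    calc x = price x (v b) := (if_pos hbx).symm
      _ ≤ ∑ t ∈ T, price x (v t) :=
          single_le_sum (fun t _ => price_nonneg hx (hv t)) hb
  simp only [not_exists, not_and, not_lt] at hbig
  set h := #{t ∈ T | 3 / 4 * x < v t} with hh
  have high : x / 2 * h ≤ ∑ t ∈ T, price x (v t) := by
    rw [hh, ← sum_boole, mul_sum]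
    exact sum_le_sum fun t _ => half_mul_ite_le_price hx (hv t)
  have mass : 2 / 3 * vOf v T - x / 6 * h ≤ ∑ t ∈ T, price x (v t) := by
    rw [hh, ← sum_boole, vOf, mul_sum, mul_sum, ← sum_sub_distrib]
    exact sum_le_sum fun t ht => two_thirds_mul_sub_le_price (hbig t ht)
  rcases le_or_gt h 1 with h1 | h2
  · have : (h : ℝ) ≤ 1 := by exact_mod_cast h1
    nlinarith
  · have : (2 : ℝ) ≤ h := by exact_mod_cast h2
    nlinarith

lemma EFXwc.efxBounded_sdiff {α : Type*} [DecidableEq α] {n : ℕ} {v : Fin n → α → ℝ}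
    {A : Fin n → Finset α} (hefx : EFXwc v A) (i j : Fin n) (hv : ∀ t, 0 ≤ v i t) :
    EFXBounded (v i) (vOf (v i) (A i)) (A j \ A i) :=
  fun g hg => (hefx i j g hg).trans (vOf_mono hv sdiff_subset)

namespace IsAlloc

variable {n : ℕ} {k : τ → ℕ}

lemma sum_sum_eq {C : Fin n → Finset τ} (hC : IsAlloc n k C) (f : τ → ℝ) :
    ∑ j, ∑ t ∈ C j, f t = ∑ t, k t * f t := by
  calc ∑ j, ∑ t ∈ C j, f t = ∑ j, ∑ t, if t ∈ C j then f t else 0 := by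
        simp only [sum_ite_mem, univ_inter]
    _ = ∑ t, ∑ j, if t ∈ C j then f t else 0 := sum_comm
    _ = ∑ t, k t * f t := by simp only [← sum_filter, sum_const, hC _, nsmul_eq_mul]

lemma sum_sum_sdiff_eq {A B : Fin n → Finset τ} (hA : IsAlloc n k A) (hB : IsAlloc n k B)
    (R : Finset τ) (f : τ → ℝ) :
    ∑ j, ∑ t ∈ A j \ R, f t = ∑ j, ∑ t ∈ B j \ R, f t := by
  simp only [sdiff_eq_filter, sum_filter]
  rw [hA.sum_sum_eq, hB.sum_sum_eq]

lemma nonpos_of_le_sum_sdiff {A B : Fin n → Finset τ} (hA : IsAlloc n k A) (hB : IsAlloc n k B)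
    (i : Fin n) (f : τ → ℝ) {c : ℝ} (hsupply : ∀ j, ∑ t ∈ A j \ A i, f t ≤ c)
    (hdemand : ∀ j, c ≤ ∑ t ∈ B j \ A i, f t) : c ≤ 0 := by
  have hAi : ∑ t ∈ A i \ A i, f t = 0 := by simp
  have htotal : ∑ _j : Fin n, c ≤ ∑ _j ∈ univ.erase i, c :=
    calc ∑ _j : Fin n, c
        _ ≤ ∑ j, ∑ t ∈ B j \ A i, f t := sum_le_sum fun j _ => hdemand j
        _ = ∑ j, ∑ t ∈ A j \ A i, f t := (hA.sum_sum_sdiff_eq hB _ f).symm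
        _ = ∑ j ∈ univ.erase i, ∑ t ∈ A j \ A i, f t := by
          rw [← sum_erase_add _ _ (mem_univ i), hAi, add_zero]
        _ ≤ ∑ _j ∈ univ.erase i, c := sum_le_sum fun j _ => hsupply j
  rw [← sum_erase_add _ _ (mem_univ i)] at htotal
  linarith

end IsAlloc

lemma exists_vOf_le_of_efxBounded {n : ℕ} {k : τ → ℕ} {v : τ → ℝ}
    {A B : Fin n → Finset τ} (hv : ∀ t, 0 ≤ v t) (hA : IsAlloc n k A) (hB : IsAlloc n k B)
    (i : Fin n) (hefx : ∀ j, EFXBounded v (vOf v (A i)) (A j \ A i)) :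
    ∃ j, vOf v (B j) ≤ 11 / 4 * vOf v (A i) := by
  by_contra! hcon
  set x := vOf v (A i)
  have hx0 : 0 ≤ x := vOf_nonneg hv _
  have hdemand : ∀ j, 7 / 4 * x < vOf v (B j \ A i) := fun j => by
    linarith [hcon j, vOf_le_vOf_sdiff_add hv (B j) (A i)]
  have hx : x = 0 := by
    refine le_antisymm (hA.nonpos_of_le_sum_sdiff hB i (fun t => price x (v t)) ?_ ?_) hx0
    · exact fun j => (hefx j).sum_price_le hv hx0
    · exact fun j => le_sum_price hv hx0 (hdemand j).le
  have hcount : (1 : ℝ) ≤ 0 := by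
    refine hA.nonpos_of_le_sum_sdiff hB i (fun t => if x < v t then 1 else 0) ?_ ?_
    · intro j
      rw [sum_boole]
      exact_mod_cast (hefx j).card_filter_lt_le_one hv
    · intro j
      obtain ⟨t, ht, hxt⟩ : ∃ t ∈ B j \ A i, x < v t :=
        exists_lt_of_sum_lt (by simpa [hx, vOf] using hdemand j)
      rw [sum_boole]
      exact_mod_cast card_pos.mpr ⟨t, mem_filter.mpr ⟨ht, hxt⟩⟩
  linarith

lemma MMS_le {α : Type*} [DecidableEq α] {n : ℕ} {k : α → ℕ} {v : α → ℝ} {c : ℝ}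
    (hc : 0 ≤ c) (h : ∀ B, IsAlloc n k B → ∃ j, vOf v (B j) ≤ c) : MMS n k v ≤ c := by
  refine Real.iSup_le (fun ⟨B, hB⟩ => ?_) hc
  obtain ⟨j, hj⟩ := h B hB
  exact (ciInf_le (Set.finite_range _).bddBelow j).trans hj

/-- Every EFX_WC exclusive allocation of goods with copies
guarantees each agent at least 4/11 of her maximin share. -/
theorem efxwc_mms_bound {n : ℕ} {k : τ → ℕ} {v : Fin n → τ → ℝ}
    {A : Fin n → Finset τ} (hv : ∀ i t, 0 ≤ v i t)
    (hA : IsAlloc n k A) (hefx : EFXwc v A) :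
    ∀ i, (4 / 11) * MMS n k (v i) ≤ vOf (v i) (A i) := by
  intro i
  have hAi := vOf_nonneg (hv i) (A i)
  have : MMS n k (v i) ≤ 11 / 4 * vOf (v i) (A i) :=
    MMS_le (by positivity) fun B hB =>
      exists_vOf_le_of_efxBounded (hv i) hA hB i fun j => hefx.efxBounded_sdiff i j (hv i)
  linarith
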